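/- arXiv:2201.09387 — 8 statements merged into one kernel-verified Lean document; each statement's English description precedes it below -/
import Mathlib

section
/- Let n ≥ 2 and let (λ(t), μ(t)) solve the ODE system dλ/dt = λ² + (n-1)λμ, dμ/dt = (n-1)μ² + λ², and set R = nλ + (n(n-1)/2)μ. Then dR/dt ≥ 2R²/(n+1). -/
/-!
Along the reaction ODE, `dR/dt = (n + c) λ² + 2c λμ + c (n - 1) μ²` with `c = n(n-1)/2`, and
completing the square gives the exact identity
`(n + 1) dR/dt - 2R² = n (n - 1)² / 2 · (λ - μ)²`, whose right-hand side is nonnegative.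
-/

theorem reaction_scalarCurvature_identity (n l m : ℝ) :
    (n + 1) * (n * (l ^ 2 + (n - 1) * l * m) + n * (n - 1) / 2 * ((n - 1) * m ^ 2 + l ^ 2))
      - 2 * (n * l + n * (n - 1) / 2 * m) ^ 2 = n * (n - 1) ^ 2 / 2 * (l - m) ^ 2 := by
  ring

theorem reaction_scalarCurvature_sq_div_le {n : ℝ} (hn : 0 ≤ n) (l m : ℝ) :
    2 * (n * l + n * (n - 1) / 2 * m) ^ 2 / (n + 1) ≤
      n * (l ^ 2 + (n - 1) * l * m) + n * (n - 1) / 2 * ((n - 1) * m ^ 2 + l ^ 2) := by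
  rw [div_le_iff₀ (by linarith)]
  have hsq : 0 ≤ n * (n - 1) ^ 2 / 2 * (l - m) ^ 2 := by positivity
  linarith [reaction_scalarCurvature_identity n l m]

theorem stmt0_general (n : ℕ) (l m : ℝ → ℝ)
    (hl : Differentiable ℝ l) (hm : Differentiable ℝ m)
    (hode1 : ∀ t, deriv l t = (l t) ^ 2 + ((n : ℝ) - 1) * (l t) * (m t))
    (hode2 : ∀ t, deriv m t = ((n : ℝ) - 1) * (m t) ^ 2 + (l t) ^ 2)
    (R : ℝ → ℝ)
    (hR : ∀ t, R t = (n : ℝ) * l t + ((n : ℝ) * ((n : ℝ) - 1) / 2) * m t) :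
    ∀ t, 2 * (R t) ^ 2 / ((n : ℝ) + 1) ≤ deriv R t := by
  intro t
  have hRdef : R = fun s => (n : ℝ) * l s + ((n : ℝ) * ((n : ℝ) - 1) / 2) * m s := funext hR
  have hdR : HasDerivAt R ((n : ℝ) * deriv l t + ((n : ℝ) * ((n : ℝ) - 1) / 2) * deriv m t) t := by
    rw [hRdef]
    exact ((hl t).hasDerivAt.const_mul _).add ((hm t).hasDerivAt.const_mul _)
  rw [hdR.deriv, hode1, hode2, hR]
  exact reaction_scalarCurvature_sq_div_le n.cast_nonneg _ _

/-- The reaction ODE for the curvature operator of a rotationally invariant Ricci flow: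
if `dλ/dt = λ² + (n-1)λμ`, `dμ/dt = (n-1)μ² + λ²`, and `R = nλ + (n(n-1)/2)μ`,
then `dR/dt ≥ 2R²/(n+1)`. -/
theorem stmt0 (n : ℕ) (hn : 2 ≤ n) (l m : ℝ → ℝ)
    (hl : Differentiable ℝ l) (hm : Differentiable ℝ m)
    (hode1 : ∀ t, deriv l t = (l t) ^ 2 + ((n : ℝ) - 1) * (l t) * (m t))
    (hode2 : ∀ t, deriv m t = ((n : ℝ) - 1) * (m t) ^ 2 + (l t) ^ 2)
    (R : ℝ → ℝ)
    (hR : ∀ t, R t = (n : ℝ) * l t + ((n : ℝ) * ((n : ℝ) - 1) / 2) * m t) :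
    ∀ t, 2 * (R t) ^ 2 / ((n : ℝ) + 1) ≤ deriv R t :=
  stmt0_general n l m hl hm hode1 hode2 R hR
end

section
/- Let n ≥ 2 and λ, μ ∈ ℝ with μ = min{λ,μ} < 0. Define F(λ,μ) = n((n+1)/2·λ² + (n-1)λμ + (n-1)²/2·μ²) and G(λ,μ) = (n-1)μ² + λ². Then -μ·F(λ,μ) + G(λ,μ)·(nλ + (n(n-1)/2 - 1)μ) + μ³ ≥ 0. -/
theorem pinching_reaction_eq (n l m : ℝ) :
    -m * (n * ((n + 1) / 2 * l ^ 2 + (n - 1) * l * m + (n - 1) ^ 2 / 2 * m ^ 2))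
        + ((n - 1) * m ^ 2 + l ^ 2) * (n * l + (n * (n - 1) / 2 - 1) * m) + m ^ 3
      = n * l ^ 2 * (l - m) - l ^ 2 * m - (n - 2) * m ^ 3 := by
  ring

theorem pinching_cubic_nonneg {n l m : ℝ} (hn : 2 ≤ n) (hml : m ≤ l) (hm : m ≤ 0) :
    0 ≤ n * l ^ 2 * (l - m) - l ^ 2 * m - (n - 2) * m ^ 3 := by
  have h₁ : 0 ≤ n * l ^ 2 * (l - m) := by
    have : 0 ≤ l - m := sub_nonneg.mpr hml
    positivity
  have h₂ : l ^ 2 * m ≤ 0 := mul_nonpos_of_nonneg_of_nonpos (sq_nonneg l) hm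
  have h₃ : (n - 2) * m ^ 3 ≤ 0 :=
    mul_nonpos_of_nonneg_of_nonpos (sub_nonneg.mpr hn) (Odd.pow_nonpos (by decide) hm)
  linarith

/-- The key algebraic estimate in the Hamilton–Ivey pinching ODE argument, case `ν = μ`:
with `F` the ODE derivative of `R = nλ + (n(n-1)/2)μ` and `G` the ODE derivative of `μ`,
if `μ = min{λ,μ} < 0` and `n ≥ 2` then
`-μ·F + G·(nλ + (n(n-1)/2 - 1)μ) + μ³ ≥ 0`. -/
theorem stmt1 (n : ℕ) (hn : 2 ≤ n) (l m : ℝ) (hmin : m = min l m) (hneg : m < 0) :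
    0 ≤ -m * ((n : ℝ) * (((n : ℝ) + 1) / 2 * l ^ 2 + ((n : ℝ) - 1) * l * m
          + ((n : ℝ) - 1) ^ 2 / 2 * m ^ 2))
        + (((n : ℝ) - 1) * m ^ 2 + l ^ 2)
          * ((n : ℝ) * l + ((n : ℝ) * ((n : ℝ) - 1) / 2 - 1) * m)
        + m ^ 3 := by
  have hml : m ≤ l := min_eq_right_iff.mp hmin.symm
  rw [pinching_reaction_eq]
  exact pinching_cubic_nonneg (by exact_mod_cast hn) hml hneg.le
end

section
/- Let n ≥ 2 and λ, μ ∈ ℝ with λ = min{λ,μ} < 0. Define F(λ,μ) = n((n+1)/2·λ² + (n-1)λμ + (n-1)²/2·μ²) and H(λ,μ) = λ² + (n-1)λμ. Then -λF(λ,μ) + (n-1)(λ² + (n-1)λμ)(λ + (n/2)μ) + λ³ = λ²(n-1)(-λ + (n/2 - 1)(μ - λ)) ≥ 0. -/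
/-- The second case of the Hamilton–Ivey pinching ODE estimate: with `λ = min{λ,μ} < 0`,
`n ≥ 2`, `F` the ODE derivative of the scalar curvature `R = nλ + (n(n-1)/2)μ`, one has
`-λF + (n-1)(λ² + (n-1)λμ)(λ + (n/2)μ) + λ³ = λ²(n-1)(-λ + (n/2 - 1)(μ - λ)) ≥ 0`. -/
theorem stmt2 (n : ℕ) (hn : 2 ≤ n) (l m : ℝ) (hmin : l = min l m) (hneg : l < 0) :
    (-l * ((n : ℝ) * (((n : ℝ) + 1) / 2 * l ^ 2 + ((n : ℝ) - 1) * l * m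
          + ((n : ℝ) - 1) ^ 2 / 2 * m ^ 2))
        + ((n : ℝ) - 1) * (l ^ 2 + ((n : ℝ) - 1) * l * m) * (l + ((n : ℝ) / 2) * m)
        + l ^ 3
      = l ^ 2 * ((n : ℝ) - 1) * (-l + ((n : ℝ) / 2 - 1) * (m - l)))
    ∧ 0 ≤ l ^ 2 * ((n : ℝ) - 1) * (-l + ((n : ℝ) / 2 - 1) * (m - l)) := by
  have hn2 : (2:ℝ) ≤ (n:ℝ) := by exact_mod_cast hn
  have hlm : l ≤ m := by rw [hmin]; exact min_le_right l m
  refine ⟨by ring, ?_⟩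
  have h1 : (0:ℝ) ≤ l ^ 2 * ((n:ℝ) - 1) := by nlinarith [sq_nonneg l]
  apply mul_nonneg h1
  have : (0:ℝ) ≤ ((n:ℝ)/2 - 1) * (m - l) := by nlinarith
  linarith
end

section
/- Let n ≥ 2 and let λ, μ ∈ ℝ with R := 2nλ + n(n-1)μ > 0. Define the quadratic form Q(h₀, h₁) = 2nλh₀h₁ + n(n-1)μh₁² on ℝ², and let |h|² = h₀² + n h₁². Then Q(h₀,h₁) ≤ (n²λ² + n(λ + (n-1)μ)²)/R · |h|², i.e., the largest eigenvalue of the matrix [[0, √n λ],[√n λ, (n-1)μ]] is at most |Ric|²/R where |Ric|² = n²λ² + n(λ+(n-1)μ)². -/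
/-!
Write `r₀ = nλ` and `r₁ = λ + (n-1)μ` for the Ricci eigenvalues, so that `R = r₀ + n r₁` and
`|Ric|² = r₀² + n r₁²`; Cauchy–Schwarz gives `R² ≤ (n+1)|Ric|²`. Since `R > 0`, it suffices that the form
`|Ric|²(h₀² + n h₁²) - R·Rm(h,h) = a h₀² - 2b h₀h₁ + c h₁²`, with `a = |Ric|²`, `b = nλR` and
`c = n²λ²(n+1)`, is positive semidefinite. Its discriminant is `ac - b² = n²λ²((n+1)|Ric|² - R²)`,
so the same Cauchy–Schwarz inequality settles both `a > 0` and `b² ≤ ac`.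
-/

theorem sq_add_mul_le_one_add_mul {N : ℝ} (hN : 0 ≤ N) (x y : ℝ) :
    (x + N * y) ^ 2 ≤ (1 + N) * (x ^ 2 + N * y ^ 2) := by
  nlinarith [mul_nonneg hN (sq_nonneg (x - y))]

theorem quadratic_nonneg_of_sq_le_mul {a b c : ℝ} (ha : 0 < a) (hdisc : b ^ 2 ≤ a * c)
    (x y : ℝ) : 0 ≤ a * x ^ 2 - 2 * b * x * y + c * y ^ 2 := by
  have hscaled : a * (a * x ^ 2 - 2 * b * x * y + c * y ^ 2)
      = (a * x - b * y) ^ 2 + (a * c - b ^ 2) * y ^ 2 := by ring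
  have : 0 ≤ a * (a * x ^ 2 - 2 * b * x * y + c * y ^ 2) := by
    rw [hscaled]
    exact add_nonneg (sq_nonneg _) (mul_nonneg (sub_nonneg.2 hdisc) (sq_nonneg y))
  exact (mul_nonneg_iff_of_pos_left ha).1 this

theorem scalar_sq_le_ricci_normSq {N : ℝ} (hN : 0 ≤ N) (l m : ℝ) :
    (2 * N * l + N * (N - 1) * m) ^ 2 ≤ (N + 1) * (N ^ 2 * l ^ 2 + N * (l + (N - 1) * m) ^ 2) := by
  have := sq_add_mul_le_one_add_mul hN (N * l) (l + (N - 1) * m)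
  linear_combination this

theorem ricci_normSq_pos {N : ℝ} (hN : 0 ≤ N) {l m : ℝ}
    (hR : 0 < 2 * N * l + N * (N - 1) * m) :
    0 < N ^ 2 * l ^ 2 + N * (l + (N - 1) * m) ^ 2 := by
  have := scalar_sq_le_ricci_normSq hN l m
  nlinarith [pow_pos hR 2]

theorem stmt7_general (n : ℕ) (l m : ℝ)
    (hR : 0 < 2 * (n : ℝ) * l + (n : ℝ) * ((n : ℝ) - 1) * m) :
    ∀ h₀ h₁ : ℝ,
      2 * (n : ℝ) * l * h₀ * h₁ + (n : ℝ) * ((n : ℝ) - 1) * m * h₁ ^ 2 ≤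
        (((n : ℝ) ^ 2 * l ^ 2 + (n : ℝ) * (l + ((n : ℝ) - 1) * m) ^ 2)
            / (2 * (n : ℝ) * l + (n : ℝ) * ((n : ℝ) - 1) * m))
          * (h₀ ^ 2 + (n : ℝ) * h₁ ^ 2) := by
  intro h₀ h₁
  have hN : (0 : ℝ) ≤ n := n.cast_nonneg
  have hdisc := scalar_sq_le_ricci_normSq hN l m
  have hform := quadratic_nonneg_of_sq_le_mul (ricci_normSq_pos hN hR)
    (b := n * l * (2 * n * l + n * (n - 1) * m)) (c := n ^ 2 * l ^ 2 * (n + 1))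
    (by linear_combination ((n : ℝ) * l) ^ 2 * hdisc) h₀ h₁
  rw [div_mul_eq_mul_div, le_div_iff₀ hR]
  linear_combination hform

/-- The Anderson–Chow type estimate for rotationally invariant tensors: with radial
sectional curvature `λ`, orbital sectional curvature `μ`, scalar curvature
`R = 2nλ + n(n-1)μ > 0`, the quadratic form `Rm(h,h) = 2nλh₀h₁ + n(n-1)μh₁²` satisfies
`Rm(h,h) ≤ (|Ric|²/R)·|h|²` where `|Ric|² = n²λ² + n(λ+(n-1)μ)²` and `|h|² = h₀² + nh₁²`. -/
theorem stmt7 (n : ℕ) (hn : 2 ≤ n) (l m : ℝ)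
    (hR : 0 < 2 * (n : ℝ) * l + (n : ℝ) * ((n : ℝ) - 1) * m) :
    ∀ h₀ h₁ : ℝ,
      2 * (n : ℝ) * l * h₀ * h₁ + (n : ℝ) * ((n : ℝ) - 1) * m * h₁ ^ 2 ≤
        (((n : ℝ) ^ 2 * l ^ 2 + (n : ℝ) * (l + ((n : ℝ) - 1) * m) ^ 2)
            / (2 * (n : ℝ) * l + (n : ℝ) * ((n : ℝ) - 1) * m))
          * (h₀ ^ 2 + (n : ℝ) * h₁ ^ 2) :=
  stmt7_general n l m hR
end

section
/- Let ψ : M × [T₀, T₁) → (0,∞) be a smooth solution of ∂_t ψ = ∂_s²ψ − (n-1)(1 − (∂_s ψ)²)/ψ on a closed manifold (where ∂_s is differentiation in a unit-speed spatial parameter). Then max_M ψ²(·, t) ≤ max_M ψ²(·, T₀) − 2(n-1)(t − T₀) for all t ∈ [T₀, T₁). In particular T₁ − T₀ ≤ max_M ψ²(·,T₀)/(2(n-1)). -/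
open Set Function Filter Topology

/-- Second derivative test at a global maximum of a smooth function. -/
lemma aux_sdt {g : ℝ → ℝ} (hg : ContDiff ℝ (⊤ : ℕ∞) g) {s₀ : ℝ}
    (hmax : ∀ s, g s ≤ g s₀) :
    deriv g s₀ = 0 ∧ deriv (deriv g) s₀ ≤ 0 := by
  have hloc : IsLocalMax g s₀ := Filter.Eventually.of_forall fun s => hmax s
  have h1 : deriv g s₀ = 0 := hloc.deriv_eq_zero
  refine ⟨h1, ?_⟩
  by_contra hc
  push_neg at hc
  have hg0 : ContDiff ℝ (⊤ : ℕ∞) g := hg.of_le le_rfl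
  have hg' : ContDiff ℝ (⊤ : ℕ∞) (deriv g) := (contDiff_infty_iff_deriv.mp hg0).2
  have hd2 : HasDerivAt (deriv g) (deriv (deriv g) s₀) s₀ :=
    ((hg'.differentiable (by simp)).differentiableAt).hasDerivAt
  have htend : Tendsto (slope (deriv g) s₀) (𝓝[≠] s₀) (𝓝 (deriv (deriv g) s₀)) :=
    hasDerivAt_iff_tendsto_slope.mp hd2
  have hev : ∀ᶠ z in 𝓝[>] s₀, 0 < slope (deriv g) s₀ z := by
    have hmono : 𝓝[>] s₀ ≤ 𝓝[≠] s₀ :=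
      nhdsWithin_mono _ fun z hz => ne_of_gt hz
    exact (htend.mono_left hmono).eventually (eventually_gt_nhds hc)
  obtain ⟨u, hu, hsub⟩ := mem_nhdsGT_iff_exists_Ioc_subset.mp hev
  have hu' : s₀ < u := hu
  have hpos : ∀ z ∈ Ioc s₀ u, 0 < deriv g z := by
    intro z hz
    have h2 : 0 < slope (deriv g) s₀ z := hsub hz
    rw [slope_def_field, h1, sub_zero] at h2
    have hz0 : 0 < z - s₀ := sub_pos.mpr hz.1
    by_contra hng
    push_neg at hng
    nlinarith [div_nonpos_of_nonpos_of_nonneg hng hz0.le]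
  have hmono : StrictMonoOn g (Icc s₀ u) := by
    apply strictMonoOn_of_deriv_pos (convex_Icc s₀ u) (hg.continuous.continuousOn)
    intro z hz
    rw [interior_Icc] at hz
    exact hpos z ⟨hz.1, hz.2.le⟩
  have := hmono (left_mem_Icc.mpr hu'.le) (right_mem_Icc.mpr hu'.le) hu'
  exact absurd (hmax u) (not_le.mpr this)

set_option maxHeartbeats 1000000 in
/-- Finite-time extinction of rotationally invariant Ricci flow: if the (periodic, i.e.
defined on a closed manifold) warping function solves
`∂_t ψ = ∂_s²ψ − (n-1)(1 − (∂_s ψ)²)/ψ`, then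
`max ψ²(·,t) ≤ max ψ²(·,T₀) − 2(n-1)(t − T₀)`, and hence
`T₁ − T₀ ≤ max ψ²(·,T₀)/(2(n-1))`. -/
theorem stmt10 (n : ℕ) (hn : 2 ≤ n) (P T₀ T₁ : ℝ) (hP : 0 < P) (hT : T₀ < T₁)
    (ψ : ℝ → ℝ → ℝ)
    (hper : ∀ s t, ψ (s + P) t = ψ s t)
    (hpos : ∀ s, ∀ t ∈ Ico T₀ T₁, 0 < ψ s t)
    (hsm : ContDiffOn ℝ (⊤ : ℕ∞) (uncurry ψ) (univ ×ˢ Ico T₀ T₁))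
    (hpde : ∀ s, ∀ t ∈ Ico T₀ T₁,
      deriv (fun t' => ψ s t') t =
        deriv (deriv (fun s' => ψ s' t)) s
          - ((n : ℝ) - 1) * (1 - (deriv (fun s' => ψ s' t) s) ^ 2) / ψ s t) :
    (∀ t ∈ Ico T₀ T₁,
        (⨆ s : ℝ, (ψ s t) ^ 2) ≤ (⨆ s : ℝ, (ψ s T₀) ^ 2) - 2 * ((n : ℝ) - 1) * (t - T₀)) ∧
      T₁ - T₀ ≤ (⨆ s : ℝ, (ψ s T₀) ^ 2) / (2 * ((n : ℝ) - 1)) := by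
  classical
  have hn1 : (2:ℝ) ≤ (n:ℝ) := by exact_mod_cast hn
  have hn0 : (0:ℝ) < (n:ℝ) - 1 := by linarith
  set S : Set (ℝ × ℝ) := univ ×ˢ Ico T₀ T₁ with hSdef
  have hS : UniqueDiffOn ℝ S := uniqueDiffOn_univ.prod (uniqueDiffOn_Ico T₀ T₁)
  have memS : ∀ s : ℝ, ∀ t ∈ Ico T₀ T₁, ((s, t) : ℝ × ℝ) ∈ S := fun s t ht => ⟨mem_univ s, ht⟩
  -- derivative of spatial slices via `fderivWithin`
  have sliceD : ∀ (u : ℝ × ℝ → ℝ), ContDiffOn ℝ (⊤ : ℕ∞) u S → ∀ (s : ℝ), ∀ t ∈ Ico T₀ T₁,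
      HasDerivAt (fun s' => u (s', t)) (fderivWithin ℝ u S (s, t) (1, 0)) s := by
    intro u hu s t ht
    have hdiff : DifferentiableWithinAt ℝ u S (s, t) :=
      (hu.differentiableOn (by simp)) (s, t) (memS s t ht)
    have hF : HasFDerivWithinAt u (fderivWithin ℝ u S (s, t)) S (s, t) := hdiff.hasFDerivWithinAt
    have he : HasDerivAt (fun s' : ℝ => ((s', t) : ℝ × ℝ)) ((1:ℝ), (0:ℝ)) s :=
      (hasDerivAt_id s).prodMk (hasDerivAt_const s t)
    have hcomp := hF.comp_hasDerivWithinAt s (he.hasDerivWithinAt (s := univ))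
      (fun s' _ => memS s' t ht)
    exact hcomp.hasDerivAt univ_mem
  set A : ℝ × ℝ → ℝ := fun p => fderivWithin ℝ (uncurry ψ) S p (1, 0) with hAdef
  have cdA : ContDiffOn ℝ (⊤ : ℕ∞) A S := (hsm.fderivWithin hS (by simp)).clm_apply contDiffOn_const
  set Bf : ℝ × ℝ → ℝ := fun p => fderivWithin ℝ A S p (1, 0) with hBdef
  have cdB : ContDiffOn ℝ (⊤ : ℕ∞) Bf S := (cdA.fderivWithin hS (by simp)).clm_apply contDiffOn_const
  -- spatial slices are smooth
  have sliceCD : ∀ t ∈ Ico T₀ T₁, ContDiff ℝ (⊤ : ℕ∞) (fun s => ψ s t) := by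
    intro t ht
    rw [← contDiffOn_univ]
    exact hsm.comp ((contDiff_id.prodMk contDiff_const).contDiffOn) (fun s _ => memS s t ht)
  have hAeq : ∀ (s : ℝ), ∀ t ∈ Ico T₀ T₁, deriv (fun s' => ψ s' t) s = A (s, t) :=
    fun s t ht => (sliceD (uncurry ψ) hsm s t ht).deriv
  have hBeq : ∀ (s : ℝ), ∀ t ∈ Ico T₀ T₁, deriv (deriv (fun s' => ψ s' t)) s = Bf (s, t) := by
    intro s t ht
    have h1 : deriv (fun s' => ψ s' t) = fun s' => A (s', t) := funext fun s' => hAeq s' t ht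
    rw [h1]
    exact (sliceD A cdA s t ht).deriv
  have hposS : ∀ p ∈ S, 0 < uncurry ψ p := fun p hp => hpos p.1 p.2 hp.2
  set D : ℝ × ℝ → ℝ :=
    fun p => 2 * uncurry ψ p * (Bf p - ((n:ℝ) - 1) * (1 - (A p) ^ 2) / uncurry ψ p) with hDdef
  have cD : ContinuousOn D S := by
    apply (continuousOn_const.mul hsm.continuousOn).mul
    exact cdB.continuousOn.sub
      ((continuousOn_const.mul (continuousOn_const.sub (cdA.continuousOn.pow 2))).div
        hsm.continuousOn (fun p hp => (hposS p hp).ne'))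
  -- time derivative of ψ² at interior times
  have timeD : ∀ (s : ℝ), ∀ τ ∈ Ioo T₀ T₁, HasDerivAt (fun t' => ψ s t' ^ 2) (D (s, τ)) τ := by
    intro s τ hτ
    have hmem : S ∈ 𝓝 ((s, τ) : ℝ × ℝ) := by
      rw [hSdef]
      exact prod_mem_nhds univ_mem (Ico_mem_nhds hτ.1 hτ.2)
    have hca : ContDiffAt ℝ (⊤ : ℕ∞) (uncurry ψ) (s, τ) := hsm.contDiffAt hmem
    have hd1 : DifferentiableAt ℝ (fun t' => ψ s t') τ := by
      have := (hca.differentiableAt (by simp)).comp τ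
        ((differentiableAt_const s).prodMk differentiableAt_id)
      exact this
    have hψd : HasDerivAt (fun t' => ψ s t') (deriv (fun t' => ψ s t') τ) τ := hd1.hasDerivAt
    have hsq := hψd.fun_pow 2
    have hIco : τ ∈ Ico T₀ T₁ := ⟨hτ.1.le, hτ.2⟩
    have hp := hpde s τ hIco
    rw [hAeq s τ hIco, hBeq s τ hIco] at hp
    rw [hp] at hsq
    refine hsq.congr_deriv ?_
    have hψτ : (0:ℝ) < ψ s τ := hpos s τ hIco
    rw [hDdef]
    simp only [uncurry_apply_pair]
    push_cast
    ring
  -- maximizers of ψ² at each time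
  have bddA : ∀ t ∈ Ico T₀ T₁, BddAbove (range fun s => ψ s t ^ 2) ∧
      ∃ s₀ ∈ Icc 0 P, (∀ s, ψ s t ^ 2 ≤ ψ s₀ t ^ 2) ∧ (⨆ s, ψ s t ^ 2) = ψ s₀ t ^ 2 := by
    intro t ht
    have hcont : Continuous fun s => ψ s t ^ 2 := ((sliceCD t ht).continuous).pow 2
    have hperiodic : Function.Periodic (fun s => ψ s t ^ 2) P := fun s => by
      simp only [hper s t]
    have hrange : range (fun s => ψ s t ^ 2) = (fun s => ψ s t ^ 2) '' Icc 0 P := by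
      rw [← hperiodic.image_Icc hP 0, zero_add]
    obtain ⟨s₀, hs₀, hmax⟩ := (isCompact_Icc (a := (0:ℝ)) (b := P)).exists_isMaxOn
      (nonempty_Icc.mpr hP.le) hcont.continuousOn
    have hglob : ∀ s, ψ s t ^ 2 ≤ ψ s₀ t ^ 2 := by
      intro s
      have hmem : ψ s t ^ 2 ∈ range (fun s => ψ s t ^ 2) := mem_range_self s
      rw [hrange] at hmem
      obtain ⟨s', hs', he⟩ := hmem
      rw [← he]
      exact hmax hs'
    have hbdd : BddAbove (range fun s => ψ s t ^ 2) := by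
      refine ⟨ψ s₀ t ^ 2, ?_⟩
      rintro y ⟨s, rfl⟩
      exact hglob s
    exact ⟨hbdd, s₀, hs₀, hglob, le_antisymm (ciSup_le hglob) (le_ciSup hbdd s₀)⟩
  set M : ℝ → ℝ := fun t => ⨆ s, ψ s t ^ 2 with hMdef
  -- continuity of M
  have contM : ∀ b ∈ Ico T₀ T₁, ContinuousOn M (Icc T₀ b) := by
    intro b hb
    have hK : IsCompact ((Icc (0:ℝ) P) ×ˢ (Icc T₀ b)) := isCompact_Icc.prod isCompact_Icc
    have hsub : (Icc (0:ℝ) P) ×ˢ (Icc T₀ b) ⊆ S := fun p hp =>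
      ⟨mem_univ _, hp.2.1, lt_of_le_of_lt hp.2.2 hb.2⟩
    have hfc : ContinuousOn (fun p : ℝ × ℝ => ψ p.1 p.2 ^ 2) ((Icc (0:ℝ) P) ×ˢ (Icc T₀ b)) :=
      (hsm.continuousOn.mono hsub).pow 2
    have huc := hK.uniformContinuousOn_of_continuous hfc
    rw [Metric.uniformContinuousOn_iff] at huc
    rw [Metric.continuousOn_iff]
    intro t ht ε hε
    obtain ⟨δ, hδ, hd⟩ := huc (ε/2) (by linarith)
    refine ⟨δ, hδ, fun t' ht' htt' => ?_⟩
    have key : ∀ t₁ ∈ Icc T₀ b, ∀ t₂ ∈ Icc T₀ b, dist t₁ t₂ < δ → M t₁ - M t₂ ≤ ε/2 := by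
      intro t₁ ht₁ t₂ ht₂ hdist
      have ht₁' : t₁ ∈ Ico T₀ T₁ := ⟨ht₁.1, lt_of_le_of_lt ht₁.2 hb.2⟩
      have ht₂' : t₂ ∈ Ico T₀ T₁ := ⟨ht₂.1, lt_of_le_of_lt ht₂.2 hb.2⟩
      obtain ⟨-, s₁, hs₁, -, hM₁⟩ := bddA t₁ ht₁'
      obtain ⟨hbdd₂, -⟩ := bddA t₂ ht₂'
      have h2 : ψ s₁ t₂ ^ 2 ≤ M t₂ := le_ciSup hbdd₂ s₁
      have hdp : dist ((s₁, t₁) : ℝ × ℝ) ((s₁, t₂) : ℝ × ℝ) < δ := by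
        rw [Prod.dist_eq]
        simp only [dist_self]
        exact max_lt hδ hdist
      have := hd (s₁, t₁) ⟨hs₁, ht₁⟩ (s₁, t₂) ⟨hs₁, ht₂⟩ hdp
      rw [Real.dist_eq] at this
      have habs : ψ s₁ t₁ ^ 2 - ψ s₁ t₂ ^ 2 ≤ ε/2 := by
        have := abs_lt.mp this
        linarith [this.2]
      have hM₁' : M t₁ = ψ s₁ t₁ ^ 2 := hM₁
      rw [hM₁']
      linarith
    rw [Real.dist_eq]
    have h1 := key t' ht' t ht htt'
    have h2 := key t ht t' ht' (by rwa [dist_comm] at htt')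
    rw [abs_lt]
    constructor <;> linarith
  -- the crucial upper bound on right slopes of M
  have crux : ∀ x ∈ Ico T₀ T₁, ∀ r : ℝ, -(2 * ((n:ℝ) - 1)) < r →
      ∀ᶠ z in 𝓝[>] x, slope M x z < r := by
    intro x hx r hr
    by_contra hcon
    rw [Filter.not_eventually] at hcon
    have hNB : (𝓝[>] x ⊓ 𝓟 {z | ¬ slope M x z < r}).NeBot := Filter.frequently_iff_neBot.mp hcon
    haveI := hNB
    obtain ⟨z, hz⟩ := Filter.exists_seq_tendsto (𝓝[>] x ⊓ 𝓟 {z | ¬ slope M x z < r})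
    have hz1 : Tendsto z atTop (𝓝[>] x) := hz.mono_right inf_le_left
    have hz2 : ∀ᶠ k in atTop, ¬ slope M x (z k) < r :=
      (hz.mono_right inf_le_right) (mem_principal_self _)
    have hz3 : ∀ᶠ k in atTop, z k ∈ Ioo x T₁ :=
      hz1 (Ioo_mem_nhdsGT hx.2)
    obtain ⟨N, hN⟩ := eventually_atTop.mp (hz3.and hz2)
    set w : ℕ → ℝ := fun k => z (k + N) with hwdef
    have hw : ∀ k, w k ∈ Ioo x T₁ ∧ ¬ slope M x (w k) < r := fun k => hN (k + N) (by omega)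
    have hwt : Tendsto w atTop (𝓝[>] x) := hz1.comp (tendsto_add_atTop_nat N)
    have hwk : ∀ k, w k ∈ Ico T₀ T₁ := fun k => ⟨hx.1.trans (hw k).1.1.le, (hw k).1.2⟩
    choose s hsIcc hsmax hsM using fun k => (bddA (w k) (hwk k)).2
    -- mean value theorem in time
    have mvt : ∀ k, ∃ τ ∈ Ioo x (w k),
        D (s k, τ) = (ψ (s k) (w k) ^ 2 - ψ (s k) x ^ 2) / (w k - x) := by
      intro k
      have hlt : x < w k := (hw k).1.1
      have hmap : MapsTo (fun t => ((s k, t) : ℝ × ℝ)) (Icc x (w k)) S := fun t ht =>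
        memS _ _ ⟨hx.1.trans ht.1, lt_of_le_of_lt ht.2 (hw k).1.2⟩
      have hcont : ContinuousOn (fun t => ψ (s k) t ^ 2) (Icc x (w k)) := by
        have h0 : ContinuousOn (fun t => uncurry ψ (s k, t)) (Icc x (w k)) :=
          hsm.continuousOn.comp ((continuous_const.prodMk continuous_id).continuousOn) hmap
        exact h0.pow 2
      have hder : ∀ τ ∈ Ioo x (w k), HasDerivAt (fun t => ψ (s k) t ^ 2) (D (s k, τ)) τ :=
        fun τ hτ => timeD (s k) τ ⟨lt_of_le_of_lt hx.1 hτ.1, hτ.2.trans (hw k).1.2⟩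
      obtain ⟨c, hc, hceq⟩ := exists_hasDerivAt_eq_slope (fun t => ψ (s k) t ^ 2)
        (fun τ => D (s k, τ)) hlt hcont hder
      exact ⟨c, hc, hceq⟩
    choose τ hτmem hτeq using mvt
    have hrD : ∀ k, r ≤ D (s k, τ k) := by
      intro k
      have h1 : r ≤ slope M x (w k) := not_lt.mp (hw k).2
      have hlt : (0:ℝ) < w k - x := sub_pos.mpr (hw k).1.1
      obtain ⟨hbddx, -⟩ := bddA x hx
      have hMx : ψ (s k) x ^ 2 ≤ M x := le_ciSup hbddx (s k)
      have hsl : slope M x (w k) ≤ (ψ (s k) (w k) ^ 2 - ψ (s k) x ^ 2) / (w k - x) := by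
        rw [slope_def_field]
        have hMw : M (w k) = ψ (s k) (w k) ^ 2 := hsM k
        have hnum : M (w k) - M x ≤ ψ (s k) (w k) ^ 2 - ψ (s k) x ^ 2 := by linarith
        gcongr
      rw [hτeq k]
      linarith
    obtain ⟨sstar, hsstar, φ, hφ, hφt⟩ := isCompact_Icc.tendsto_subseq hsIcc
    have hwt' : Tendsto (fun k => w (φ k)) atTop (𝓝 x) :=
      (hwt.mono_right nhdsWithin_le_nhds).comp hφ.tendsto_atTop
    have hτt : Tendsto (fun k => τ (φ k)) atTop (𝓝 x) := by
      apply tendsto_of_tendsto_of_tendsto_of_le_of_le tendsto_const_nhds hwt'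
      · exact fun k => (hτmem (φ k)).1.le
      · exact fun k => (hτmem (φ k)).2.le
    have hτS : ∀ k, ((s (φ k), τ (φ k)) : ℝ × ℝ) ∈ S := fun k =>
      memS _ _ ⟨hx.1.trans (hτmem (φ k)).1.le, (hτmem (φ k)).2.trans (hw (φ k)).1.2⟩
    have hDlim : Tendsto (fun k => D (s (φ k), τ (φ k))) atTop (𝓝 (D (sstar, x))) := by
      have hpt : Tendsto (fun k => ((s (φ k), τ (φ k)) : ℝ × ℝ)) atTop (𝓝[S] (sstar, x)) := by
        rw [tendsto_nhdsWithin_iff]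
        exact ⟨hφt.prodMk_nhds hτt, Filter.Eventually.of_forall hτS⟩
      exact Filter.Tendsto.comp (cD (sstar, x) (memS sstar x hx)) hpt
    have hrDstar : r ≤ D (sstar, x) :=
      ge_of_tendsto hDlim (Filter.Eventually.of_forall fun k => hrD (φ k))
    -- sstar is a maximizer at time x
    have hMcont : Tendsto (fun k => M (w (φ k))) atTop (𝓝 (M x)) := by
      set b := (x + T₁) / 2 with hbdef
      have hxb : x < b := by rw [hbdef]; linarith [hx.2]
      have hbI : b ∈ Ico T₀ T₁ := ⟨hx.1.trans hxb.le, by rw [hbdef]; linarith [hx.2]⟩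
      have hc := (contM b hbI) x ⟨hx.1, hxb.le⟩
      apply hc.tendsto.comp
      rw [tendsto_nhdsWithin_iff]
      refine ⟨hwt', ?_⟩
      have hev : ∀ᶠ k in atTop, w (φ k) < b := hwt'.eventually (eventually_lt_nhds hxb)
      exact hev.mono fun k hk => ⟨(hwk (φ k)).1, hk.le⟩
    have hflim : Tendsto (fun k => ψ (s (φ k)) (w (φ k)) ^ 2) atTop (𝓝 (ψ sstar x ^ 2)) := by
      have hcf : ContinuousWithinAt (fun p : ℝ × ℝ => ψ p.1 p.2 ^ 2) S (sstar, x) :=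
        (hsm.continuousOn.pow 2) _ (memS sstar x hx)
      have hwS : ∀ k, ((s (φ k), w (φ k)) : ℝ × ℝ) ∈ S := fun k => memS _ _ (hwk (φ k))
      have hpt : Tendsto (fun k => ((s (φ k), w (φ k)) : ℝ × ℝ)) atTop (𝓝[S] (sstar, x)) := by
        rw [tendsto_nhdsWithin_iff]
        exact ⟨hφt.prodMk_nhds hwt', Filter.Eventually.of_forall hwS⟩
      exact hcf.tendsto.comp hpt
    have hfM : ψ sstar x ^ 2 = M x := by
      have h1 : Tendsto (fun k => ψ (s (φ k)) (w (φ k)) ^ 2) atTop (𝓝 (M x)) := by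
        have : (fun k => ψ (s (φ k)) (w (φ k)) ^ 2) = fun k => M (w (φ k)) :=
          funext fun k => (hsM (φ k)).symm
        rw [this]
        exact hMcont
      exact tendsto_nhds_unique hflim h1
    obtain ⟨hbddx, -⟩ := bddA x hx
    have hmax2 : ∀ s', ψ s' x ^ 2 ≤ ψ sstar x ^ 2 := by
      intro s'
      rw [hfM]
      exact le_ciSup hbddx s'
    have hmaxψ : ∀ s', ψ s' x ≤ ψ sstar x := by
      intro s'
      nlinarith [hpos s' x hx, hpos sstar x hx, hmax2 s']
    obtain ⟨hd0, hd2⟩ := aux_sdt (sliceCD x hx) hmaxψ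
    have hA0 : A (sstar, x) = 0 := by rw [← hAeq sstar x hx]; exact hd0
    have hB0 : Bf (sstar, x) ≤ 0 := by rw [← hBeq sstar x hx]; exact hd2
    have hDle : D (sstar, x) ≤ -(2 * ((n:ℝ) - 1)) := by
      have hψp : (0:ℝ) < ψ sstar x := hpos sstar x hx
      have hDval : D (sstar, x) = 2 * ψ sstar x * Bf (sstar, x) - 2 * ((n:ℝ) - 1) := by
        simp only [hDdef, hA0, uncurry]
        field_simp
        ring
      nlinarith [mul_nonneg hψp.le (neg_nonneg.mpr hB0)]
    linarith
  -- Gronwall-type comparison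
  have part1 : ∀ t ∈ Ico T₀ T₁, M t ≤ M T₀ - 2 * ((n:ℝ) - 1) * (t - T₀) := by
    intro t ht
    rcases eq_or_lt_of_le ht.1 with heq | hlt
    · rw [← heq]; simp
    have hBd : ∀ z ∈ Ico T₀ t, HasDerivWithinAt (fun z => M T₀ - 2 * ((n:ℝ) - 1) * (z - T₀))
        (-(2 * ((n:ℝ) - 1))) (Ici z) z := by
      intro z _
      have h1 : HasDerivAt (fun z => M T₀ - 2 * ((n:ℝ) - 1) * (z - T₀))
          (0 - 2 * ((n:ℝ) - 1) * 1) z :=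
        (hasDerivAt_const z (M T₀)).sub (((hasDerivAt_id z).sub_const T₀).const_mul _)
      have h2 : (0:ℝ) - 2 * ((n:ℝ) - 1) * 1 = -(2 * ((n:ℝ) - 1)) := by ring
      rw [h2] at h1
      exact h1.hasDerivWithinAt
    have hres := image_le_of_liminf_slope_right_le_deriv_boundary
      (f := M) (a := T₀) (b := t)
      (B := fun z => M T₀ - 2 * ((n:ℝ) - 1) * (z - T₀))
      (B' := fun _ => -(2 * ((n:ℝ) - 1)))
      (contM t ht) (by simp)
      ((continuous_const.sub ((continuous_const.mul (continuous_id.sub continuous_const)))).continuousOn) hBd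
      (fun x hx r hr => ((crux x ⟨hx.1, lt_of_lt_of_le hx.2 ht.2.le⟩ r hr).frequently))
    exact hres (right_mem_Icc.mpr ht.1)
  have hMT₀pos : 0 < M T₀ := by
    obtain ⟨hbdd0, -⟩ := bddA T₀ ⟨le_rfl, hT⟩
    have h1 : ψ 0 T₀ ^ 2 ≤ M T₀ := le_ciSup hbdd0 0
    nlinarith [hpos 0 T₀ ⟨le_rfl, hT⟩]
  have part2 : T₁ - T₀ ≤ M T₀ / (2 * ((n:ℝ) - 1)) := by
    have h2 : (0:ℝ) < 2 * ((n:ℝ) - 1) := by linarith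
    have key : ∀ t ∈ Ico T₀ T₁, t - T₀ ≤ M T₀ / (2 * ((n:ℝ) - 1)) := by
      intro t ht
      have h0 : 0 < M t := by
        obtain ⟨hbddt, -⟩ := bddA t ht
        have hb : ψ 0 t ^ 2 ≤ M t := le_ciSup hbddt 0
        nlinarith [hpos 0 t ht]
      have := part1 t ht
      rw [le_div_iff₀ h2]
      nlinarith
    by_contra hcc
    push_neg at hcc
    set c := M T₀ / (2 * ((n:ℝ) - 1)) with hcdef
    have hc0 : 0 < c := div_pos hMT₀pos h2
    set t := T₀ + (c + (T₁ - T₀)) / 2 with htdef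
    have htmem : t ∈ Ico T₀ T₁ := by
      constructor
      · rw [htdef]; nlinarith
      · rw [htdef]; nlinarith
    have := key t htmem
    rw [htdef] at this
    nlinarith
  exact ⟨part1, part2⟩
end

section
/- Let η(r) = 1 − a·e^{−b/r} for r ∈ (0,1] with b = 100n, a = 1/(100n)², and η(r) = 1 for r ≤ 0. Let ψ ∈ C^∞ satisfy ‖ψ − 1‖_{C²} < δ with δ sufficiently small (depending on n). Then for the warped metric dr² + (η(r)ψ(r))²g_{S^n} on [0, 1/2] one has: the modified radial curvature satisfies K̃_rad(r) ≥ K_rad(r) + (ab/(2r⁴))(b − 2r − 8δr²)e^{−b/r} > K_rad(r), the modified orbital curvature satisfies K̃_orb(r) ≥ K_orb(r) − 4δ(ab/r²)e^{−b/r} − 4((ab/r²)e^{−b/r})², and the modified scalar curvature satisfies R̃(r) ≥ R(r) + (nab/(2r⁴))((2 − 8na)b − 4r − 16nδr²)e^{−b/r} ≥ R(r). -/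
open Set

/-- Radial sectional curvature `K_rad = −f''/f` of `dr² + f(r)²g_{Sⁿ}`. -/
noncomputable def Krad (f : ℝ → ℝ) (r : ℝ) : ℝ := -(deriv (deriv f) r) / f r

/-- Orbital sectional curvature `K_orb = (1−(f')²)/f²` of `dr² + f(r)²g_{Sⁿ}`. -/
noncomputable def Korb (f : ℝ → ℝ) (r : ℝ) : ℝ := (1 - (deriv f r) ^ 2) / (f r) ^ 2

/-- Scalar curvature `R = 2nK_rad + n(n-1)K_orb` of `dr² + f(r)²g_{Sⁿ}`. -/
noncomputable def Rscal (n : ℕ) (f : ℝ → ℝ) (r : ℝ) : ℝ :=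
  2 * (n : ℝ) * Krad f r + (n : ℝ) * ((n : ℝ) - 1) * Korb f r

/-!
Write `f = η ψ`. By the product rule, `K_rad(f) = K_rad(ψ) + K_rad(η) − 2 (η'/η)(ψ'/ψ)` and
`K_orb(f) = K_orb(ψ) + (η⁻² − 1)/ψ² − (η'/η)² − 2 (η'/η)(ψ'/ψ)`, where
`η' = −(ab/r²) e^{−b/r}` and `η'' = −(ab/r⁴)(b − 2r) e^{−b/r}`. Since `1/2 ≤ η ≤ 1` and `ψ`, `ψ'`
are `δ`-close to `1`, `0`, the term `K_rad(η) = (ab/r⁴)(b − 2r) e^{−b/r}/η` is positive and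
dominates the cross term, while the orbital curvature loses at most `4δu + 4u²` with
`u = −η'`. In the scalar curvature the radial gain `2n K_rad(η)` has a factor `b/r⁴`, whereas the
orbital loss `n(n−1)·4u²` is only `O(n² a² b² / r⁴)`; the choice `a = b⁻²` makes it a small
fraction of the gain.
-/

open Filter Topology

lemma deriv_deriv_mul {η ψ : ℝ → ℝ} {r : ℝ}
    (hη : ∀ᶠ x in 𝓝 r, DifferentiableAt ℝ η x) (hψ : ∀ᶠ x in 𝓝 r, DifferentiableAt ℝ ψ x)
    (hη' : DifferentiableAt ℝ (deriv η) r) (hψ' : DifferentiableAt ℝ (deriv ψ) r) :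
    deriv (deriv fun x => η x * ψ x) r
      = deriv (deriv η) r * ψ r + 2 * (deriv η r * deriv ψ r) + η r * deriv (deriv ψ) r := by
  have hfirst : deriv (fun x => η x * ψ x) =ᶠ[𝓝 r]
      fun x => deriv η x * ψ x + η x * deriv ψ x := by
    filter_upwards [hη, hψ] with x hηx hψx
    exact deriv_fun_mul hηx hψx
  have hsecond := (hη'.hasDerivAt.mul hψ.self_of_nhds.hasDerivAt).add
    (hη.self_of_nhds.hasDerivAt.mul hψ'.hasDerivAt)
  rw [hfirst.deriv_eq]
  exact hsecond.deriv.trans (by ring)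

lemma Krad_mul {η ψ : ℝ → ℝ} {r : ℝ}
    (hη : ∀ᶠ x in 𝓝 r, DifferentiableAt ℝ η x) (hψ : ∀ᶠ x in 𝓝 r, DifferentiableAt ℝ ψ x)
    (hη' : DifferentiableAt ℝ (deriv η) r) (hψ' : DifferentiableAt ℝ (deriv ψ) r)
    (hηr : η r ≠ 0) (hψr : ψ r ≠ 0) :
    Krad (fun x => η x * ψ x) r
      = Krad ψ r + Krad η r - 2 * (deriv η r / η r) * (deriv ψ r / ψ r) := by
  simp only [Krad]
  rw [deriv_deriv_mul hη hψ hη' hψ']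
  field_simp
  ring

lemma Korb_mul {η ψ : ℝ → ℝ} {r : ℝ} (hη : DifferentiableAt ℝ η r)
    (hψ : DifferentiableAt ℝ ψ r) (hηr : η r ≠ 0) (hψr : ψ r ≠ 0) :
    Korb (fun x => η x * ψ x) r
      = Korb ψ r + (1 / η r ^ 2 - 1) / ψ r ^ 2 - (deriv η r / η r) ^ 2
        - 2 * (deriv η r / η r) * (deriv ψ r / ψ r) := by
  simp only [Korb]
  rw [deriv_fun_mul hη hψ]
  field_simp
  ring

/-- The paper's `η`. Only its values at `x > 0` enter, so the paper's extension by `1` to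
`x ≤ 0` is not modelled. -/
noncomputable def cutoff (a b x : ℝ) : ℝ := 1 - a * Real.exp (-b / x)

lemma hasDerivAt_exp_neg_div (b : ℝ) {x : ℝ} (hx : x ≠ 0) :
    HasDerivAt (fun y => Real.exp (-b / y)) (b / x ^ 2 * Real.exp (-b / x)) x := by
  convert ((hasDerivAt_inv hx).const_mul (-b)).exp using 1
  · simp only [div_eq_mul_inv]
  · simp only [div_eq_mul_inv]; ring

lemma hasDerivAt_cutoff (a b : ℝ) {x : ℝ} (hx : x ≠ 0) :
    HasDerivAt (cutoff a b) (-(a * b / x ^ 2 * Real.exp (-b / x))) x :=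
  (((hasDerivAt_exp_neg_div b hx).const_mul a).const_sub 1).congr_deriv (by ring)

lemma hasDerivAt_deriv_cutoff (a b : ℝ) {x : ℝ} (hx : x ≠ 0) :
    HasDerivAt (deriv (cutoff a b)) (-(a * b / x ^ 4 * (b - 2 * x) * Real.exp (-b / x))) x := by
  have hderiv : deriv (cutoff a b) =ᶠ[𝓝 x]
      fun y => -(a * b) * (Real.exp (-b / y) / y ^ 2) := by
    filter_upwards [isOpen_ne.mem_nhds hx] with y hy
    rw [(hasDerivAt_cutoff a b hy).deriv]
    ring
  have h := ((hasDerivAt_exp_neg_div b hx).div (hasDerivAt_pow 2 x) (pow_ne_zero 2 hx)).const_mul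
    (-(a * b))
  refine (h.congr_of_eventuallyEq hderiv).congr_deriv ?_
  norm_num
  field_simp

lemma Krad_cutoff (a b : ℝ) {r : ℝ} (hr : r ≠ 0) :
    Krad (cutoff a b) r = a * b / r ^ 4 * (b - 2 * r) * Real.exp (-b / r) / cutoff a b r := by
  rw [Krad, (hasDerivAt_deriv_cutoff a b hr).deriv, neg_neg]

lemma cutoff_le_one {a : ℝ} (ha : 0 ≤ a) (b x : ℝ) : cutoff a b x ≤ 1 := by
  unfold cutoff
  nlinarith [Real.exp_pos (-b / x)]

lemma exp_neg_div_le_one {b x : ℝ} (hb : 0 ≤ b) (hx : 0 < x) : Real.exp (-b / x) ≤ 1 :=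
  Real.exp_le_one_iff.mpr (div_nonpos_of_nonpos_of_nonneg (neg_nonpos.mpr hb) hx.le)

lemma one_sub_le_cutoff {a b x : ℝ} (ha : 0 ≤ a) (hb : 0 ≤ b) (hx : 0 < x) :
    1 - a ≤ cutoff a b x := by
  unfold cutoff
  nlinarith [exp_neg_div_le_one hb hx]

lemma radial_gain_bound {η ψ ψ' δ c s : ℝ} (hη0 : 0 < η) (hη1 : η ≤ 1) (hψ : 1 - δ ≤ ψ)
    (hψ' : -δ ≤ ψ') (hδ0 : 0 ≤ δ) (hδ : δ ≤ 1 / 2) (hs : 0 ≤ s) (hc : 8 * δ * s ≤ c) :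
    (c - 8 * δ * s) / 2 ≤ (c * ψ + 2 * s * ψ') / (η * ψ) := by
  have hψ0 : 0 < ψ := by linarith
  have hshrink : (c - 8 * δ * s) * (η * ψ) ≤ (c - 8 * δ * s) * ψ := by
    nlinarith [mul_le_mul_of_nonneg_right hη1 hψ0.le]
  have hcross : 0 ≤ s * (2 * δ * ψ + ψ') := mul_nonneg hs (by nlinarith)
  have hmain : 0 ≤ c * ψ := mul_nonneg (by nlinarith) hψ0.le
  rw [le_div_iff₀ (mul_pos hη0 hψ0)]
  linarith

lemma Krad_cutoff_mul_ge {a b δ r : ℝ} {ψ : ℝ → ℝ} (hψ : ContDiff ℝ 2 ψ) (ha0 : 0 ≤ a)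
    (ha : a < 1) (hb : 0 ≤ b) (hr : 0 < r) (hδ0 : 0 ≤ δ) (hδ : δ ≤ 1 / 2)
    (hψr : 1 - δ ≤ ψ r) (hψ'r : -δ ≤ deriv ψ r) (hbr : 8 * δ * r ^ 2 ≤ b - 2 * r) :
    Krad ψ r + a * b / (2 * r ^ 4) * (b - 2 * r - 8 * δ * r ^ 2) * Real.exp (-b / r)
      ≤ Krad (fun x => cutoff a b x * ψ x) r := by
  have hr0 : r ≠ 0 := hr.ne'
  have hη0 : 0 < cutoff a b r := (sub_pos.mpr ha).trans_le (one_sub_le_cutoff ha0 hb hr)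
  have hψ0 : 0 < ψ r := by linarith
  have hη : ∀ᶠ x in 𝓝 r, DifferentiableAt ℝ (cutoff a b) x :=
    (eventually_ne_nhds hr0).mono fun x hx => (hasDerivAt_cutoff a b hx).differentiableAt
  have hψd : ∀ᶠ x in 𝓝 r, DifferentiableAt ℝ ψ x :=
    Eventually.of_forall (hψ.differentiable (by norm_num))
  have hψ' : DifferentiableAt ℝ (deriv ψ) r :=
    (hψ.deriv' (n := 1)).differentiable one_ne_zero r
  rw [Krad_mul hη hψd (hasDerivAt_deriv_cutoff a b hr0).differentiableAt hψ' hη0.ne' hψ0.ne',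
    Krad_cutoff a b hr0, (hasDerivAt_cutoff a b hr0).deriv]
  set E := Real.exp (-b / r)
  have hgain := mul_le_mul_of_nonneg_left
    (radial_gain_bound hη0 (cutoff_le_one ha0 b r) hψr hψ'r hδ0 hδ (sq_nonneg r) hbr)
    (by positivity : 0 ≤ a * b * E / r ^ 4)
  have hfactor : a * b / r ^ 4 * (b - 2 * r) * E / cutoff a b r
      - 2 * (-(a * b / r ^ 2 * E) / cutoff a b r) * (deriv ψ r / ψ r)
      = a * b * E / r ^ 4 * (((b - 2 * r) * ψ r + 2 * r ^ 2 * deriv ψ r)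
        / (cutoff a b r * ψ r)) := by
    field_simp
    ring
  have hlhs : a * b / (2 * r ^ 4) * (b - 2 * r - 8 * δ * r ^ 2) * E
      = a * b * E / r ^ 4 * ((b - 2 * r - 8 * δ * r ^ 2) / 2) := by
    field_simp
  linarith

lemma orbital_change_bound {η ψ ψ' δ u : ℝ} (hη : 1 / 2 ≤ η) (hη1 : η ≤ 1)
    (hηψ : 1 / 2 ≤ η * ψ) (hψ' : -δ ≤ ψ') (hδ : 0 ≤ δ) (hu : 0 ≤ u) :
    -(4 * δ * u) - 4 * u ^ 2 ≤ (1 / η ^ 2 - 1) / ψ ^ 2 - (u / η) ^ 2 + 2 * (u / η) * (ψ' / ψ) := by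
  have hη0 : 0 < η := by linarith
  have hψ0 : 0 < ψ := pos_of_mul_pos_right (by linarith) hη0.le
  have hfirst : 0 ≤ (1 / η ^ 2 - 1) / ψ ^ 2 := by
    apply div_nonneg _ (sq_nonneg ψ)
    rw [sub_nonneg, le_div_iff₀ (by positivity)]
    nlinarith
  have hsecond : (u / η) ^ 2 ≤ 4 * u ^ 2 := by
    have : u / η ≤ 2 * u := by rw [div_le_iff₀ hη0]; nlinarith
    nlinarith [div_nonneg hu hη0.le]
  have hthird : -(4 * δ * u) ≤ 2 * (u / η) * (ψ' / ψ) := by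
    have hratio : -(2 * δ) ≤ ψ' / (η * ψ) := by
      rw [le_div_iff₀ (by positivity)]; nlinarith
    have : 2 * (u / η) * (ψ' / ψ) = 2 * u * (ψ' / (η * ψ)) := by field_simp
    rw [this]; nlinarith
  linarith

lemma Korb_cutoff_mul_ge {a b δ r : ℝ} {ψ : ℝ → ℝ} (hψ : DifferentiableAt ℝ ψ r)
    (ha0 : 0 ≤ a) (ha : a ≤ 1 / 4) (hb : 0 ≤ b) (hr : 0 < r) (hδ0 : 0 ≤ δ) (hδ : δ ≤ 1 / 3)
    (hψr : 1 - δ ≤ ψ r) (hψ'r : -δ ≤ deriv ψ r) :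
    Korb ψ r - 4 * δ * (a * b / r ^ 2) * Real.exp (-b / r)
        - 4 * ((a * b / r ^ 2) * Real.exp (-b / r)) ^ 2
      ≤ Korb (fun x => cutoff a b x * ψ x) r := by
  have hr0 : r ≠ 0 := hr.ne'
  have hη : 3 / 4 ≤ cutoff a b r := by linarith [one_sub_le_cutoff ha0 hb hr]
  have hηψ : 1 / 2 ≤ cutoff a b r * ψ r := by nlinarith
  rw [Korb_mul (hasDerivAt_cutoff a b hr0).differentiableAt hψ (by linarith) (by nlinarith),
    (hasDerivAt_cutoff a b hr0).deriv]
  have hchange := orbital_change_bound (by linarith) (cutoff_le_one ha0 b r) hηψ hψ'r hδ0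
    (by positivity : 0 ≤ a * b / r ^ 2 * Real.exp (-b / r))
  have hsign : ∀ u η p : ℝ, -(-u / η) ^ 2 - 2 * (-u / η) * p = -(u / η) ^ 2 + 2 * (u / η) * p :=
    fun _ _ _ => by ring
  linarith [hsign (a * b / r ^ 2 * Real.exp (-b / r)) (cutoff a b r) (deriv ψ r / ψ r)]

lemma scalar_gain_bound {n a b δ r E : ℝ} (hn : 1 ≤ n) (ha : 0 ≤ a) (hb : 0 ≤ b) (hδ : 0 ≤ δ)
    (hE0 : 0 ≤ E) (hE1 : E ≤ 1) (hr : 0 < r) :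
    n * a * b / (2 * r ^ 4) * ((2 - 8 * n * a) * b - 4 * r - 16 * n * δ * r ^ 2) * E
      ≤ 2 * n * (a * b / (2 * r ^ 4) * (b - 2 * r - 8 * δ * r ^ 2) * E)
        - n * (n - 1) * (4 * δ * (a * b / r ^ 2) * E + 4 * ((a * b / r ^ 2) * E) ^ 2) := by
  have hslack : 0 ≤ 8 * (n - 1) * δ * r ^ 2 + 8 * a * b * (n - (n - 1) * E) := by
    have : (n - 1) * E ≤ n := by nlinarith
    have : 0 ≤ (n - 1) * δ * r ^ 2 := by positivity
    nlinarith [mul_nonneg ha hb]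
  have hdiff : 2 * n * (a * b / (2 * r ^ 4) * (b - 2 * r - 8 * δ * r ^ 2) * E)
        - n * (n - 1) * (4 * δ * (a * b / r ^ 2) * E + 4 * ((a * b / r ^ 2) * E) ^ 2)
        - n * a * b / (2 * r ^ 4) * ((2 - 8 * n * a) * b - 4 * r - 16 * n * δ * r ^ 2) * E
      = n * (a * b * E / (2 * r ^ 4))
        * (8 * (n - 1) * δ * r ^ 2 + 8 * a * b * (n - (n - 1) * E)) := by
    field_simp
    ring
  have hweight : 0 ≤ n * (a * b * E / (2 * r ^ 4)) := by positivity
  linarith [mul_nonneg hweight hslack]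

lemma Rscal_cutoff_mul_ge {n : ℕ} (hn : 1 ≤ n) {a b δ r : ℝ} {ψ : ℝ → ℝ}
    (hψ : ContDiff ℝ 2 ψ) (ha0 : 0 ≤ a) (ha : a ≤ 1 / 4) (hb : 0 ≤ b) (hr : 0 < r)
    (hδ0 : 0 ≤ δ) (hδ : δ ≤ 1 / 3) (hψr : 1 - δ ≤ ψ r) (hψ'r : -δ ≤ deriv ψ r)
    (hbr : 8 * δ * r ^ 2 ≤ b - 2 * r) :
    Rscal n ψ r + (n : ℝ) * a * b / (2 * r ^ 4)
        * ((2 - 8 * (n : ℝ) * a) * b - 4 * r - 16 * (n : ℝ) * δ * r ^ 2) * Real.exp (-b / r)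
      ≤ Rscal n (fun x => cutoff a b x * ψ x) r := by
  have hn' : (1 : ℝ) ≤ n := by exact_mod_cast hn
  have hK := Krad_cutoff_mul_ge hψ ha0 (by linarith) hb hr hδ0 (by linarith) hψr hψ'r hbr
  have hO := Korb_cutoff_mul_ge (hψ.differentiable (by norm_num) r) ha0 ha hb hr hδ0 hδ hψr hψ'r
  have hS := scalar_gain_bound hn' ha0 hb hδ0 (Real.exp_pos _).le (exp_neg_div_le_one hb hr) hr
  have hK' := mul_le_mul_of_nonneg_left hK (by positivity : (0 : ℝ) ≤ 2 * n)
  have hO' := mul_le_mul_of_nonneg_left hO (by nlinarith : (0 : ℝ) ≤ n * (n - 1))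
  simp only [Rscal]
  linarith

lemma surgery_constants {n δ r : ℝ} (hn : 1 ≤ n) (hδ0 : 0 ≤ δ) (hδ : δ < 1 / (100 * n))
    (hr0 : 0 < r) (hr : r ≤ 1 / 2) :
    1 / (100 * n) ^ 2 ≤ 1 / 4 ∧ δ ≤ 1 / 3 ∧ 8 * δ * r ^ 2 < 100 * n - 2 * r ∧
      0 < (2 - 8 * n * (1 / (100 * n) ^ 2)) * (100 * n) - 4 * r - 16 * n * δ * r ^ 2 := by
  have hnδ : n * δ < 1 / 100 := by
    rw [lt_div_iff₀ (by positivity)] at hδ; linarith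
  have hδ1 : δ < 1 / 100 := by nlinarith
  have hr2 : r ^ 2 ≤ 1 / 4 := by nlinarith
  have hsimp : (2 - 8 * n * (1 / (100 * n) ^ 2)) * (100 * n) = 200 * n - 8 / 100 := by
    field_simp
    ring
  refine ⟨?_, by linarith, by nlinarith, ?_⟩
  · rw [div_le_div_iff₀ (by positivity) (by norm_num)]; nlinarith
  · have hnδr : n * δ * r ^ 2 ≤ n * δ * (1 / 4) :=
      mul_le_mul_of_nonneg_left hr2 (mul_nonneg (by linarith) hδ0)
    rw [hsimp]
    nlinarith

/-- Curvature comparison for the surgery cutoff: with `η(r) = 1 − a e^{−b/r}`, `b = 100n`,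
`a = 1/(100n)²`, and `‖ψ − 1‖_{C²} < δ` for `δ` small, the warped metric
`dr² + (ηψ)²g_{Sⁿ}` satisfies on `(0, 1/2]` the stated lower bounds for the modified
radial, orbital and scalar curvatures in terms of those of `dr² + ψ²g_{Sⁿ}`. -/
theorem stmt11 (n : ℕ) (hn : 2 ≤ n) :
    ∃ δ₀ > (0 : ℝ), ∀ δ ∈ Ioo (0 : ℝ) δ₀, ∀ ψ : ℝ → ℝ, ContDiff ℝ 2 ψ →
      (∀ r ∈ Icc (0 : ℝ) 1,
        |ψ r - 1| < δ ∧ |deriv ψ r| < δ ∧ |deriv (deriv ψ) r| < δ) →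
      ∀ r ∈ Ioc (0 : ℝ) (1 / 2),
        letI a : ℝ := 1 / (100 * (n : ℝ)) ^ 2
        letI b : ℝ := 100 * (n : ℝ)
        letI f : ℝ → ℝ := fun x => (1 - a * Real.exp (-b / x)) * ψ x
        (Krad ψ r + a * b / (2 * r ^ 4) * (b - 2 * r - 8 * δ * r ^ 2) * Real.exp (-b / r)
            ≤ Krad f r ∧ Krad ψ r < Krad f r) ∧
        (Korb ψ r - 4 * δ * (a * b / r ^ 2) * Real.exp (-b / r)
            - 4 * ((a * b / r ^ 2) * Real.exp (-b / r)) ^ 2 ≤ Korb f r) ∧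
        (Rscal n ψ r + (n : ℝ) * a * b / (2 * r ^ 4)
              * ((2 - 8 * (n : ℝ) * a) * b - 4 * r - 16 * (n : ℝ) * δ * r ^ 2)
              * Real.exp (-b / r) ≤ Rscal n f r ∧
          Rscal n ψ r ≤ Rscal n f r) := by
  have hn1 : (1 : ℝ) ≤ n := by exact_mod_cast (by omega : 1 ≤ n)
  refine ⟨1 / (100 * n), by positivity, fun δ ⟨hδ0, hδ⟩ ψ hψ hbound r ⟨hr0, hr⟩ => ?_⟩
  obtain ⟨hψr, hψ'r, -⟩ := hbound r ⟨hr0.le, hr.trans (by norm_num)⟩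
  have hψr : 1 - δ ≤ ψ r := by linarith [(abs_lt.mp hψr).1]
  have hψ'r : -δ ≤ deriv ψ r := (abs_lt.mp hψ'r).1.le
  obtain ⟨ha, hδ3, hbr, hscal⟩ := surgery_constants hn1 hδ0.le hδ hr0 hr
  have ha0 : (0 : ℝ) ≤ 1 / (100 * n) ^ 2 := by positivity
  have hb0 : (0 : ℝ) ≤ 100 * n := by positivity
  have hK := Krad_cutoff_mul_ge hψ ha0 (by linarith) hb0 hr0 hδ0.le (by linarith) hψr hψ'r hbr.le
  have hR := Rscal_cutoff_mul_ge (n := n) (by omega) hψ ha0 ha hb0 hr0 hδ0.le hδ3 hψr hψ'r hbr.le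
  refine ⟨⟨hK, hK.trans_lt' (lt_add_of_pos_right _ ?_)⟩,
    Korb_cutoff_mul_ge (hψ.differentiable (by norm_num) r) ha0 ha hb0 hr0 hδ0.le hδ3 hψr hψ'r,
    hR, hR.trans' (le_add_of_nonneg_right ?_)⟩
  · exact mul_pos (mul_pos (by positivity) (by linarith)) (Real.exp_pos _)
  · exact mul_nonneg (mul_nonneg (by positivity) hscal.le) (Real.exp_pos _).le
end

section
/- Let ĥ : (0, 5/8] → ℝ be defined by ĥ(r) = η'(r) for r ≤ 1/4, ĥ(r) = χ(r)η'(r) − (1−χ(r))cos((π/2)(5/8 − r)) for r ∈ [1/4, 1/2], and ĥ(r) = −cos((π/2)(5/8 − r)) for r ∈ [1/2, 5/8], where η(r) = 1 − ae^{−b/r} with η'' < 0 and η' > −1/10 on [1/4, 1/2], and χ is a smooth nonincreasing cutoff with χ ≡ 1 on [0, 1/4] and supp χ ⊂ [0, 1/2). Then −1 < ĥ(r) < 0 for all r ∈ (0, 5/8), and ĥ'(r) < 0 for all r ∈ (1/4, 1/2). -/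
open Set

private lemma stmt12_aux2 (dx dh dh2 x c0 s0 : ℝ)
    (hdx : dx ≤ 0) (hdh : -(1/10) < dh) (hdh2 : dh2 < 0)
    (hx0 : 0 ≤ x) (hx1 : x ≤ 1) (hc : 1/2 ≤ c0) (hs : 0 < s0) (hp : 0 < Real.pi) :
    dx * dh + x * dh2 - ((0 - dx) * c0 + (1 - x) * (-s0 * -(Real.pi / 2))) < 0 := by
  have ht1 : dx * (dh + c0) ≤ 0 :=
    mul_nonpos_of_nonpos_of_nonneg hdx (by linarith)
  rcases eq_or_lt_of_le hx0 with hx | hx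
  · have ht3 : 0 < (1 - x) * (s0 * (Real.pi / 2)) := by
      rw [← hx]; positivity
    nlinarith
  · have ht2 : x * dh2 < 0 := mul_neg_of_pos_of_neg hx hdh2
    have ht3 : 0 ≤ (1 - x) * (s0 * (Real.pi / 2)) :=
      mul_nonneg (by linarith) (by positivity)
    nlinarith

private lemma stmt12_aux (x d c0 : ℝ) (hx0 : 0 ≤ x) (hx1 : x ≤ 1)
    (hd1 : -(1/10) < d) (hd2 : d < 0) (hc0 : 0 < c0) (hc1 : c0 < 1) :
    -1 < x * d - (1 - x) * c0 ∧ x * d - (1 - x) * c0 < 0 := by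
  rcases eq_or_lt_of_le hx0 with hx | hx
  · rw [← hx]; constructor <;> linarith
  · have p1 : 0 < x * (d + 1/10) := mul_pos hx (by linarith)
    have p2 : 0 ≤ (1 - x) * (1 - c0) := mul_nonneg (by linarith) (by linarith)
    have p3 : x * d < 0 := mul_neg_of_pos_of_neg hx hd2
    have p4 : 0 ≤ (1 - x) * c0 := mul_nonneg (by linarith) hc0.le
    constructor <;> nlinarith

set_option maxHeartbeats 1600000 in
/-- Monotonicity verification in the construction of the standard surgery cap profile:
the interpolation `ĥ` between the derivative of the cutoff `η(r) = 1 − a e^{−b/r}`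
and the derivative of a spherical-cap warping function satisfies `−1 < ĥ < 0` on
`(0, 5/8)` and `ĥ' < 0` on `(1/4, 1/2)`. -/
theorem stmt12 (n : ℕ) (hn : 2 ≤ n)
    (a b : ℝ) (ha : a = 1 / (100 * (n : ℝ)) ^ 2) (hb : b = 100 * (n : ℝ))
    (η : ℝ → ℝ) (hη : ∀ r > (0 : ℝ), η r = 1 - a * Real.exp (-b / r))
    (hη'' : ∀ r ∈ Icc (1 / 4 : ℝ) (1 / 2), deriv (deriv η) r < 0)
    (hη' : ∀ r ∈ Icc (1 / 4 : ℝ) (1 / 2), -(1 / 10) < deriv η r)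
    (χ : ℝ → ℝ) (hχsm : ContDiff ℝ (⊤ : ℕ∞) χ) (hχmono : ∀ r, deriv χ r ≤ 0)
    (hχ1 : ∀ r ≤ (1 / 4 : ℝ), χ r = 1) (hχ0 : ∀ r ≥ (1 / 2 : ℝ), χ r = 0)
    (hχrange : ∀ r, 0 ≤ χ r ∧ χ r ≤ 1)
    (h : ℝ → ℝ)
    (h1 : ∀ r ∈ Ioc (0 : ℝ) (1 / 4), h r = deriv η r)
    (h2 : ∀ r ∈ Icc (1 / 4 : ℝ) (1 / 2),
      h r = χ r * deriv η r - (1 - χ r) * Real.cos (Real.pi / 2 * (5 / 8 - r)))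
    (h3 : ∀ r ∈ Icc (1 / 2 : ℝ) (5 / 8), h r = -Real.cos (Real.pi / 2 * (5 / 8 - r))) :
    (∀ r ∈ Ioo (0 : ℝ) (5 / 8), -1 < h r ∧ h r < 0) ∧
      ∀ r ∈ Ioo (1 / 4 : ℝ) (1 / 2), deriv h r < 0 := by
  have hn2 : (2 : ℝ) ≤ (n : ℝ) := by exact_mod_cast hn
  have hb200 : (200 : ℝ) ≤ b := by rw [hb]; linarith
  have hbpos : (0 : ℝ) < b := by linarith
  have hapos : (0 : ℝ) < a := by rw [ha]; positivity
  have hab : a = 1 / b ^ 2 := by rw [ha, hb]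
  -- derivative of η at any r > 0
  have hder : ∀ r : ℝ, 0 < r →
      HasDerivAt η (-(a * Real.exp (-b / r) * (b / r ^ 2))) r := by
    intro r hr
    have hinner : HasDerivAt (fun x : ℝ => -b / x) (b / r ^ 2) r := by
      have h0 : HasDerivAt (fun x : ℝ => -b * x⁻¹) (-b * -(r ^ 2)⁻¹) r :=
        (hasDerivAt_inv (ne_of_gt hr)).const_mul (-b)
      simp only [div_eq_mul_inv]
      convert h0 using 1
      field_simp
    have hexp := hinner.exp
    have hfull := ((hasDerivAt_const r (1 : ℝ)).sub (hexp.const_mul a))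
    have heq : (fun x : ℝ => 1 - a * Real.exp (-b / x)) =ᶠ[nhds r] η := by
      filter_upwards [Ioi_mem_nhds hr] with x hx
      exact (hη x hx).symm
    have := hfull.congr_of_eventuallyEq heq.symm
    exact this.congr_deriv (by ring)
  have hderiv : ∀ r : ℝ, 0 < r →
      deriv η r = -(a * Real.exp (-b / r) * (b / r ^ 2)) := fun r hr =>
    (hder r hr).deriv
  have hneg : ∀ r : ℝ, 0 < r → deriv η r < 0 := by
    intro r hr
    rw [hderiv r hr]
    have : 0 < a * Real.exp (-b / r) * (b / r ^ 2) := by positivity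
    linarith
  -- lower bound on (0, 1/4]
  have hlow : ∀ r : ℝ, 0 < r → r ≤ 1 / 4 → -1 < deriv η r := by
    intro r hr hr4
    rw [hderiv r hr]
    have hx : (0 : ℝ) ≤ b / (3 * r) := by positivity
    have h1' : b / (3 * r) ≤ Real.exp (b / (3 * r)) := by
      have := Real.add_one_le_exp (b / (3 * r))
      linarith
    have hcube : (b / (3 * r)) ^ 3 ≤ Real.exp (b / r) := by
      calc (b / (3 * r)) ^ 3 ≤ Real.exp (b / (3 * r)) ^ 3 := by
            exact pow_le_pow_left₀ hx h1' 3
        _ = Real.exp (b / (3 * r) + b / (3 * r) + b / (3 * r)) := by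
            rw [Real.exp_add, Real.exp_add]; ring
        _ = Real.exp (b / r) := by congr 1; field_simp; ring
    have hcpos : (0 : ℝ) < (b / (3 * r)) ^ 3 := by positivity
    have hexple : Real.exp (-b / r) ≤ 27 * r ^ 3 / b ^ 3 := by
      rw [neg_div, Real.exp_neg]
      rw [inv_le_iff_one_le_mul₀ (Real.exp_pos _)]
      calc (1 : ℝ) = (27 * r ^ 3 / b ^ 3) * (b / (3 * r)) ^ 3 := by
            field_simp; ring
        _ ≤ (27 * r ^ 3 / b ^ 3) * Real.exp (b / r) := by
            apply mul_le_mul_of_nonneg_left hcube; positivity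
    have hkey : a * Real.exp (-b / r) * (b / r ^ 2) < 1 := by
      have : a * Real.exp (-b / r) * (b / r ^ 2)
          ≤ a * (27 * r ^ 3 / b ^ 3) * (b / r ^ 2) := by
        apply mul_le_mul_of_nonneg_right _ (by positivity)
        exact mul_le_mul_of_nonneg_left hexple (le_of_lt hapos)
      have heq2 : a * (27 * r ^ 3 / b ^ 3) * (b / r ^ 2) = 27 * r / b ^ 4 := by
        rw [hab]; field_simp
      rw [heq2] at this
      have : 27 * r / b ^ 4 < 1 := by
        rw [div_lt_one (by positivity)]
        nlinarith [pow_le_pow_left₀ (by norm_num : (0:ℝ) ≤ 200) hb200 4]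
      linarith
    linarith
  constructor
  · intro r hr
    obtain ⟨hr0, hr58⟩ := hr
    rcases le_or_gt r (1 / 4) with hc1 | hc1
    · rw [h1 r ⟨hr0, hc1⟩]
      exact ⟨hlow r hr0 hc1, hneg r hr0⟩
    rcases le_or_gt r (1 / 2) with hc2 | hc2
    · have hmem : r ∈ Icc (1 / 4 : ℝ) (1 / 2) := ⟨le_of_lt hc1, hc2⟩
      rw [h2 r hmem]
      set c := Real.cos (Real.pi / 2 * (5 / 8 - r)) with hc
      have hpi : Real.pi < 3.15 := Real.pi_lt_d2
      have hpi3 : 3.14 < Real.pi := Real.pi_gt_d2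
      have hargpos : 0 < Real.pi / 2 * (5 / 8 - r) := by nlinarith
      have harglt : Real.pi / 2 * (5 / 8 - r) < Real.pi / 2 := by nlinarith
      have hcpos : 0 < c := Real.cos_pos_of_mem_Ioo ⟨by linarith, harglt⟩
      have hclt : c < 1 := by
        have := Real.cos_lt_cos_of_nonneg_of_le_pi le_rfl (by linarith) hargpos
        rwa [Real.cos_zero] at this
      have hχr := hχrange r
      have hdη1 := hη' r hmem
      have hdη2 := hneg r hr0
      exact stmt12_aux (χ r) (deriv η r) c hχr.1 hχr.2 hdη1 hdη2 hcpos hclt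
    · have hmem : r ∈ Icc (1 / 2 : ℝ) (5 / 8) := ⟨le_of_lt hc2, le_of_lt hr58⟩
      rw [h3 r hmem]
      have hpi : Real.pi < 3.15 := Real.pi_lt_d2
      have hpi3 : 3.14 < Real.pi := Real.pi_gt_d2
      have hargpos : 0 < Real.pi / 2 * (5 / 8 - r) := by nlinarith
      have harglt : Real.pi / 2 * (5 / 8 - r) < Real.pi / 2 := by nlinarith
      have hcpos : 0 < Real.cos (Real.pi / 2 * (5 / 8 - r)) :=
        Real.cos_pos_of_mem_Ioo ⟨by linarith, harglt⟩
      have hclt : Real.cos (Real.pi / 2 * (5 / 8 - r)) < 1 := by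
        have := Real.cos_lt_cos_of_nonneg_of_le_pi le_rfl (by linarith) hargpos
        rwa [Real.cos_zero] at this
      constructor <;> linarith
  · intro r hr
    obtain ⟨hr14, hr12⟩ := hr
    have hr0 : (0 : ℝ) < r := by linarith
    have hmem : r ∈ Icc (1 / 4 : ℝ) (1 / 2) := ⟨le_of_lt hr14, le_of_lt hr12⟩
    -- derivative data
    have hχd : HasDerivAt χ (deriv χ r) r :=
      ((hχsm.differentiable (by simp)) r).hasDerivAt
    have hηdd : HasDerivAt (deriv η) (deriv (deriv η) r) r :=
      (differentiableAt_of_deriv_ne_zero (ne_of_lt (hη'' r hmem))).hasDerivAt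
    have hu : HasDerivAt (fun x : ℝ => Real.pi / 2 * (5 / 8 - x)) (-(Real.pi / 2)) r := by
      have h0 := ((hasDerivAt_id r).const_sub (5 / 8 : ℝ)).const_mul (Real.pi / 2)
      exact h0.congr_deriv (by ring)
    have hcosd : HasDerivAt (fun x : ℝ => Real.cos (Real.pi / 2 * (5 / 8 - x)))
        (-Real.sin (Real.pi / 2 * (5 / 8 - r)) * -(Real.pi / 2)) r := hu.cos
    have hg : HasDerivAt (fun x : ℝ => χ x * deriv η x -
        (1 - χ x) * Real.cos (Real.pi / 2 * (5 / 8 - x)))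
        ((deriv χ r * deriv η r + χ r * deriv (deriv η) r) -
          ((0 - deriv χ r) * Real.cos (Real.pi / 2 * (5 / 8 - r)) +
            (1 - χ r) * (-Real.sin (Real.pi / 2 * (5 / 8 - r)) * -(Real.pi / 2)))) r :=
      (hχd.mul hηdd).sub (((hasDerivAt_const r (1 : ℝ)).sub hχd).mul hcosd)
    have heq : (fun x : ℝ => χ x * deriv η x -
        (1 - χ x) * Real.cos (Real.pi / 2 * (5 / 8 - x))) =ᶠ[nhds r] h := by
      filter_upwards [Ioo_mem_nhds hr14 hr12] with x hx
      exact (h2 x ⟨le_of_lt hx.1, le_of_lt hx.2⟩).symm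
    have hdh := (hg.congr_of_eventuallyEq heq.symm).deriv
    rw [hdh]
    -- sign analysis
    have hpi : Real.pi < 3.15 := Real.pi_lt_d2
    have hpi3 : 3.14 < Real.pi := Real.pi_gt_d2
    have hq1 : (0 : ℝ) < 5 / 8 - r := by linarith
    have hq2 : (5 : ℝ) / 8 - r < 3 / 8 := by linarith
    have hpih : (0 : ℝ) < Real.pi / 2 := by linarith
    have hargpos : 0 < Real.pi / 2 * (5 / 8 - r) := mul_pos hpih hq1
    have hargle : Real.pi / 2 * (5 / 8 - r) ≤ 0.6 := by
      have h6 : Real.pi / 2 * (5 / 8 - r) ≤ 1.6 * (3 / 8) :=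
        mul_le_mul (by linarith) (by linarith) (by linarith) (by norm_num)
      linarith
    have hsin : 0 < Real.sin (Real.pi / 2 * (5 / 8 - r)) :=
      Real.sin_pos_of_pos_of_lt_pi hargpos (by linarith)
    have hcge : 1 / 2 ≤ Real.cos (Real.pi / 2 * (5 / 8 - r)) := by
      have hle := Real.one_sub_sq_div_two_le_cos (x := Real.pi / 2 * (5 / 8 - r))
      have hsq : (Real.pi / 2 * (5 / 8 - r)) ^ 2 ≤ (0.6 : ℝ) ^ 2 :=
        pow_le_pow_left₀ hargpos.le hargle 2
      norm_num at hsq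
      linarith
    exact stmt12_aux2 (deriv χ r) (deriv η r) (deriv (deriv η) r) (χ r)
      (Real.cos (Real.pi / 2 * (5 / 8 - r))) (Real.sin (Real.pi / 2 * (5 / 8 - r)))
      (hχmono r) (hη' r hmem) (hη'' r hmem) (hχrange r).1 (hχrange r).2
      hcge hsin (by linarith)
end

section
/- Let B : [0,∞) → (0,1] be smooth with B(0) = 1, B'(0) = 0, B''(0) < 0, B strictly decreasing on (0,∞), and B(r) → 0 as r → ∞. Let z₀ : [0,1] → (0,1] be smooth with z₀(0) = 1, z₀'(0) = 0. Then for every R > 0 there exists τ̲ such that for all τ ≥ τ̲ and A₁ > 0 fixed: B(A₁e^{τ/2}u) ≤ z₀(u) for all u ∈ [0, 2e^{−τ/2}R]. That is, the steeply rescaled Bryant profile eventually fits below z₀ near u = 0. -/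
open Set Filter

/-!
Integrating a bound on the second derivative twice gives `B r ≤ 1 + a r²` on some `[0, δ]`
with `a = B''(0)/4 < 0`, and `z₀ u ≥ 1 + b u²` on some `[0, η]` with `b < 0`. For
`k = A₁ e^{τ/2}` we have `a k² ≤ b` once `τ` is large, which settles the points with `k u ≤ δ`.
Beyond that range `B (k u) ≤ B δ ≤ 1 + a δ²`, and this lies below `1 + b u²` because
`u ≤ 2 e^{-τ/2} R → 0`.
-/

theorem le_of_le_of_hasDerivAt_le {f f' g g' : ℝ → ℝ} {a b : ℝ}
    (hf : ∀ x, HasDerivAt f (f' x) x) (hg : ∀ x, HasDerivAt g (g' x) x)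
    (ha : f a ≤ g a) (hle : ∀ x ∈ Ico a b, f' x ≤ g' x) :
    ∀ x ∈ Icc a b, f x ≤ g x := fun _ hx =>
  image_le_of_deriv_right_le_deriv_boundary
    (fun x _ => (hf x).continuousAt.continuousWithinAt) (fun x _ => (hf x).hasDerivWithinAt) ha
    (fun x _ => (hg x).continuousAt.continuousWithinAt) (fun x _ => (hg x).hasDerivWithinAt) hle hx

theorem le_of_le_of_hasDerivAt_of_hasDerivAt_le {f f' f'' g g' g'' : ℝ → ℝ} {a b : ℝ}
    (hf : ∀ x, HasDerivAt f (f' x) x) (hf' : ∀ x, HasDerivAt f' (f'' x) x)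
    (hg : ∀ x, HasDerivAt g (g' x) x) (hg' : ∀ x, HasDerivAt g' (g'' x) x)
    (ha : f a ≤ g a) (ha' : f' a ≤ g' a) (hle : ∀ x ∈ Ico a b, f'' x ≤ g'' x) :
    ∀ x ∈ Icc a b, f x ≤ g x :=
  le_of_le_of_hasDerivAt_le hf hg ha fun x hx =>
    le_of_le_of_hasDerivAt_le hf' hg' ha' hle x (Ico_subset_Icc_self hx)

theorem hasDerivAt_quadratic (y d c a x : ℝ) :
    HasDerivAt (fun x => y + d * (x - a) + c / 2 * (x - a) ^ 2) (d + c * (x - a)) x := by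
  have h := (hasDerivAt_id' x).sub_const a
  exact (((h.const_mul d).const_add y).fun_add ((h.fun_pow 2).const_mul (c / 2))).congr_deriv
    (by push_cast; ring)

theorem hasDerivAt_linear (d c a x : ℝ) : HasDerivAt (fun x => d + c * (x - a)) c x := by
  simpa using (((hasDerivAt_id x).sub_const a).const_mul c).const_add d

section TaylorBounds

variable {f : ℝ → ℝ} {a c : ℝ}

theorem ContDiff.continuous_deriv_deriv_two (hf : ContDiff ℝ 2 f) :
    Continuous (deriv (deriv f)) :=
  (ContDiff.deriv' (n := 1) hf).continuous_deriv le_rfl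

theorem ContDiff.exists_le_quadratic_of_deriv_deriv_lt (hf : ContDiff ℝ 2 f)
    (hc : deriv (deriv f) a < c) :
    ∃ b > a, ∀ x ∈ Icc a b, f x ≤ f a + deriv f a * (x - a) + c / 2 * (x - a) ^ 2 := by
  have hlt : ∀ᶠ x in nhds a, deriv (deriv f) x < c :=
    (hf.continuous_deriv_deriv_two.continuousAt).eventually_lt continuousAt_const hc
  obtain ⟨b, hab, hb⟩ := mem_nhdsGE_iff_exists_Icc_subset.mp (nhdsWithin_le_nhds hlt)
  refine ⟨b, hab, le_of_le_of_hasDerivAt_of_hasDerivAt_le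
    (fun x => (hf.differentiable two_ne_zero x).hasDerivAt)
    (fun x => (hf.differentiable_deriv_two x).hasDerivAt)
    (hasDerivAt_quadratic _ _ c a) (hasDerivAt_linear _ c a) (by simp) (by simp)
    fun x hx => (hb (Ico_subset_Icc_self hx)).le⟩

theorem ContDiff.exists_quadratic_le_of_lt_deriv_deriv (hf : ContDiff ℝ 2 f)
    (hc : c < deriv (deriv f) a) :
    ∃ b > a, ∀ x ∈ Icc a b, f a + deriv f a * (x - a) + c / 2 * (x - a) ^ 2 ≤ f x := by
  have hlt : ∀ᶠ x in nhds a, c < deriv (deriv f) x :=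
    continuousAt_const.eventually_lt (hf.continuous_deriv_deriv_two.continuousAt) hc
  obtain ⟨b, hab, hb⟩ := mem_nhdsGE_iff_exists_Icc_subset.mp (nhdsWithin_le_nhds hlt)
  refine ⟨b, hab, le_of_le_of_hasDerivAt_of_hasDerivAt_le
    (hasDerivAt_quadratic _ _ c a) (hasDerivAt_linear _ c a)
    (fun x => (hf.differentiable two_ne_zero x).hasDerivAt)
    (fun x => (hf.differentiable_deriv_two x).hasDerivAt) (by simp) (by simp)
    fun x hx => (hb (Ico_subset_Icc_self hx)).le⟩

end TaylorBounds

theorem comp_mul_le_of_quadratic_bounds {B z : ℝ → ℝ} {a b δ k u : ℝ} (hδ : 0 ≤ δ)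
    (hB : ∀ r ∈ Icc 0 δ, B r ≤ 1 + a * r ^ 2) (hBanti : AntitoneOn B (Ici δ))
    (hz : 1 + b * u ^ 2 ≤ z u) (hk : a * k ^ 2 ≤ b) (hu : a * δ ^ 2 ≤ b * u ^ 2)
    (hku : 0 ≤ k * u) : B (k * u) ≤ z u := by
  rcases le_or_gt (k * u) δ with hsmall | hlarge
  · calc B (k * u) ≤ 1 + a * k ^ 2 * u ^ 2 := by
          simpa [mul_pow, mul_assoc] using hB _ ⟨hku, hsmall⟩
      _ ≤ 1 + b * u ^ 2 := by gcongr
      _ ≤ z u := hz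
  · calc B (k * u) ≤ B δ := hBanti self_mem_Ici (mem_Ici.mpr hlarge.le) hlarge.le
      _ ≤ 1 + a * δ ^ 2 := hB δ ⟨hδ, le_rfl⟩
      _ ≤ 1 + b * u ^ 2 := by linarith
      _ ≤ z u := hz

theorem tendsto_exp_neg_half_atTop : Tendsto (fun τ : ℝ => Real.exp (-τ / 2)) atTop (nhds 0) :=
  Real.tendsto_exp_atBot.comp (tendsto_neg_atTop_atBot.atBot_div_const two_pos)

theorem stmt18_general (B z₀ : ℝ → ℝ)
    (hB : ContDiff ℝ 2 B)
    (hB0 : B 0 = 1) (hB'0 : deriv B 0 = 0) (hB''0 : deriv (deriv B) 0 < 0)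
    (hBanti : StrictAntiOn B (Ioi 0))
    (hz : ContDiff ℝ 2 z₀)
    (hz0 : z₀ 0 = 1) (hz'0 : deriv z₀ 0 = 0) :
    ∀ R > (0 : ℝ), ∀ A₁ > (0 : ℝ), ∃ τ₀ : ℝ, ∀ τ ≥ τ₀,
      ∀ u ∈ Icc (0 : ℝ) (2 * Real.exp (-τ / 2) * R),
        B (A₁ * Real.exp (τ / 2) * u) ≤ z₀ u := by
  intro R _ A₁ hA₁
  set a := deriv (deriv B) 0 / 4
  set b := (-|deriv (deriv z₀) 0| - 1) / 2
  have ha : a < 0 := by simp only [a]; linarith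
  have hb : b < 0 := by simp only [b]; linarith [abs_nonneg (deriv (deriv z₀) 0)]
  obtain ⟨δ, hδ, hBq⟩ := hB.exists_le_quadratic_of_deriv_deriv_lt
    (a := 0) (c := deriv (deriv B) 0 / 2) (by linarith)
  obtain ⟨η, hη, hzq⟩ := hz.exists_quadratic_le_of_lt_deriv_deriv
    (a := 0) (c := -|deriv (deriv z₀) 0| - 1) (by linarith [neg_abs_le (deriv (deriv z₀) 0)])
  simp only [hB0, hB'0, hz0, hz'0, zero_mul, add_zero, sub_zero] at hBq hzq
  set U := fun τ : ℝ => 2 * Real.exp (-τ / 2) * R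
  have hU : Tendsto U atTop (nhds 0) := by
    simpa using (tendsto_exp_neg_half_atTop.const_mul 2).mul_const R
  have hk : Tendsto (fun τ : ℝ => (A₁ * Real.exp (τ / 2)) ^ 2) atTop atTop :=
    (tendsto_pow_atTop two_ne_zero).comp <| (Real.tendsto_exp_atTop.comp
      (tendsto_id.atTop_div_const two_pos)).const_mul_atTop hA₁
  have hUη : ∀ᶠ τ in atTop, U τ < η := hU.eventually_lt_const hη
  have hUδ : ∀ᶠ τ in atTop, a * δ ^ 2 < b * U τ ^ 2 := by
    refine (hU.pow 2 |>.const_mul b).eventually_const_lt ?_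
    simpa using mul_neg_of_neg_of_pos ha (pow_pos hδ 2)
  have hkb : ∀ᶠ τ in atTop, a * (A₁ * Real.exp (τ / 2)) ^ 2 ≤ b :=
    (hk.const_mul_atTop_of_neg ha).eventually_le_atBot b
  obtain ⟨τ₀, hτ₀⟩ := eventually_atTop.mp (hUη.and (hUδ.and hkb))
  refine ⟨τ₀, fun τ hτ u ⟨hu0, huU⟩ => ?_⟩
  obtain ⟨hη', hδ', hkb'⟩ := hτ₀ τ hτ
  refine comp_mul_le_of_quadratic_bounds hδ.le (fun r hr => (hBq r hr).trans_eq (by ring))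
    (hBanti.antitoneOn.mono fun r hr => lt_of_lt_of_le hδ hr) ?_ hkb' ?_ (by positivity)
  · exact (hzq u ⟨hu0, huU.trans hη'.le⟩).trans_eq' (by ring)
  · have : b * U τ ^ 2 ≤ b * u ^ 2 := mul_le_mul_of_nonpos_left (by gcongr) hb.le
    linarith

/-- The steeply rescaled Bryant profile eventually fits below `z₀` near `u = 0`:
for `B` with `B(0) = 1`, `B'(0) = 0`, `B''(0) < 0`, `B` strictly decreasing on `(0,∞)`
with `B → 0` at infinity, and `z₀` with `z₀(0) = 1`, `z₀'(0) = 0`, for every `R > 0`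
and `A₁ > 0` there is `τ̲` with `B(A₁e^{τ/2}u) ≤ z₀(u)` for all `τ ≥ τ̲` and
`u ∈ [0, 2e^{−τ/2}R]`. -/
theorem stmt18 (B z₀ : ℝ → ℝ)
    (hB : ContDiff ℝ 2 B) (hBrange : ∀ r ≥ (0 : ℝ), 0 < B r ∧ B r ≤ 1)
    (hB0 : B 0 = 1) (hB'0 : deriv B 0 = 0) (hB''0 : deriv (deriv B) 0 < 0)
    (hBanti : StrictAntiOn B (Ioi 0))
    (hBlim : Tendsto B atTop (nhds 0))
    (hz : ContDiff ℝ 2 z₀) (hzrange : ∀ u ∈ Icc (0 : ℝ) 1, 0 < z₀ u ∧ z₀ u ≤ 1)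
    (hz0 : z₀ 0 = 1) (hz'0 : deriv z₀ 0 = 0) :
    ∀ R > (0 : ℝ), ∀ A₁ > (0 : ℝ), ∃ τ₀ : ℝ, ∀ τ ≥ τ₀,
      ∀ u ∈ Icc (0 : ℝ) (2 * Real.exp (-τ / 2) * R),
        B (A₁ * Real.exp (τ / 2) * u) ≤ z₀ u :=
  stmt18_general B z₀ hB hB0 hB'0 hB''0 hBanti hz hz0 hz'0
end
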